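/- arXiv:2103.12875 — 2 statements merged into one kernel-verified Lean document; each statement's English description precedes it below -/
import Mathlib

section
/- Let v = A B 1 2^n be a Dyck vector where n ≥ 1 and A either contains at least three 0s, or contains exactly two 0s and at least two 1s. Then defc(v) ≥ 2·len(B) + defc(A 1 2^n), where A 1 2^n denotes the Dyck vector obtained by deleting the block B from v. -/
/-- dinv contribution of an entry coming from extended negative positions. -/
def negContrib (x : ℤ) : ℕ := (if x ≤ -1 then 1 else 0) + (if x ≤ -2 then 1 else 0)

/-- The diagonal inversion statistic of a quasi-Dyck vector, with the
convention `v_k = k - 1` for `k ≤ 0`. -/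
def dinv (v : List ℤ) : ℕ :=
  (Finset.univ.filter (fun p : Fin v.length × Fin v.length =>
      (p.1 : ℕ) < (p.2 : ℕ) ∧ (v.get p.1 - v.get p.2 = 0 ∨ v.get p.1 - v.get p.2 = 1))).card
  + (v.map negContrib).sum

def area (v : List ℤ) : ℤ := v.sum

def defc (v : List ℤ) : ℤ := (v.length.choose 2 : ℤ) - area v - (dinv v : ℤ)

/-- Quasi-Dyck vector: nonempty, starts with 0, consecutive increases ≤ 1. -/
def IsQDV (v : List ℤ) : Prop :=
  v.head? = some 0 ∧ ∀ i : ℕ, i + 1 < v.length → v.getD (i + 1) 0 ≤ v.getD i 0 + 1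

def IsDyck (v : List ℤ) : Prop := IsQDV v ∧ ∀ x ∈ v, 0 ≤ x

def stepRel (v w : List ℤ) : Prop := w = 0 :: v.map (· + 1)

def dyckEquiv : List ℤ → List ℤ → Prop := Relation.EqvGen stepRel

def dyckSetoid : Setoid (List ℤ) := Relation.EqvGen.setoid stepRel

abbrev DyckClass := Quotient dyckSetoid

def cls (v : List ℤ) : DyckClass := Quotient.mk dyckSetoid v

/-- Reduced Dyck vector: a Dyck vector that is not `0 z⁺` for a Dyck vector `z`. -/
def IsReducedDV (v : List ℤ) : Prop :=
  IsDyck v ∧ ¬ ∃ z : List ℤ, IsDyck z ∧ v = 0 :: z.map (· + 1)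

/-- The leader of a QDV: the largest `d` such that `v` starts with `0,1,...,d`. -/
def leader (v : List ℤ) : ℕ :=
  Nat.findGreatest (fun d => ∀ i, i ≤ d → v.getD i 0 = (i : ℤ)) (v.length - 1)

/-- Delete the leader symbol and append `leader - 1`. -/
def nuStep (v : List ℤ) : List ℤ :=
  v.take (leader v) ++ v.drop (leader v + 1) ++ [(leader v : ℤ) - 1]

def nuApplies (v : List ℤ) : Prop :=
  IsQDV v ∧ 2 ≤ v.length ∧ 0 ≤ v.getD 1 0 ∧ (leader v : ℤ) ≤ v.getLastD 0 + 2

/-- The map NU₁ on Dyck classes, as a relation. -/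
def nuClassRel (c c' : DyckClass) : Prop :=
  ∃ v, nuApplies v ∧ c = cls v ∧ c' = cls (nuStep v)

def stepOk (A : List ℤ) : Prop := ∀ i : ℕ, i + 1 < A.length → A.getD (i + 1) 0 ≤ A.getD i 0 + 1

def okA (A : List ℤ) : Prop :=
  A = [] ∨ ((∀ x ∈ A, x ≤ 2) ∧ 0 ≤ A.getLastD 0 ∧ stepOk A)

def okB (B : List ℤ) : Prop :=
  B = [] ∨ ((∀ x ∈ B, x ≤ 2) ∧ B.headD 0 ≤ 1 ∧ -1 ≤ B.getLastD 0 ∧ stepOk B)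

/-- The map NU₂ on Dyck classes, as a relation. -/
def nu2ClassRel (c c' : DyckClass) : Prop :=
  (∃ (h : ℕ) (A : List ℤ), 2 ≤ h ∧ okA A ∧
      c = cls ([0, 1] ++ List.replicate h (2:ℤ) ++ A ++ List.replicate (h - 1) (-1)) ∧
      c' = cls (List.replicate h (0:ℤ) ++ [1] ++ A ++ List.replicate h 1)) ∨
  (∃ (k : ℕ) (B : List ℤ), 1 ≤ k ∧ okB B ∧
      c = cls ([0, 1] ++ List.replicate k (2:ℤ) ++ B ++ List.replicate k (-1)) ∧
      c' = cls (List.replicate (k + 1) (0:ℤ) ++ B ++ [0] ++ List.replicate k 1))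

/-- The extended next-up map NU = NU₁ ∪ NU₂, as a relation on Dyck classes. -/
def nuRel (c c' : DyckClass) : Prop := nuClassRel c c' ∨ nu2ClassRel c c'

/-- An integer partition, given by its weakly decreasing list of positive parts. -/
def IsPartitionList (l : List ℕ) : Prop := l.Pairwise (· ≥ ·) ∧ ∀ x ∈ l, 0 < x

/-- `phi l n` = the QDV `(0 - λ_n, 1 - λ_{n-1}, ..., (n-1) - λ_1)`. -/
def phi (l : List ℕ) (n : ℕ) : List ℤ :=
  List.ofFn (fun i : Fin n => (i : ℤ) - (l.getD (n - 1 - (i : ℕ)) 0 : ℤ))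

def nuOne (g : List ℕ) : List ℕ :=
  (g.length + 1) :: (g.map (· - 1)).filter (fun x => 0 < x)

def ndOne (g : List ℕ) : List ℕ :=
  g.tail.map (· + 1) ++ List.replicate (g.headD 0 - g.length) 1

/-- dinv of a partition: number of cells with arm - leg ∈ {0,1}. -/
def pdinv (l : List ℕ) : ℕ :=
  (Finset.univ.filter (fun c : Fin l.length × Fin (l.headD 0) =>
    (c.2 : ℕ) < l.get c.1 ∧
      (l.get c.1 - 1 - (c.2 : ℕ) =
          (Finset.univ.filter (fun i' : Fin l.length =>
            (c.1 : ℕ) < (i' : ℕ) ∧ (c.2 : ℕ) < l.get i')).card ∨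
        l.get c.1 - 1 - (c.2 : ℕ) =
          (Finset.univ.filter (fun i' : Fin l.length =>
            (c.1 : ℕ) < (i' : ℕ) ∧ (c.2 : ℕ) < l.get i')).card + 1))).card

/-- `bWord [n_1, ..., n_r]` = `0 1^{n_1} 0 1^{n_2} ⋯ 0 1^{n_r}`. -/
def bWord (ns : List ℕ) : List ℤ :=
  (ns.map (fun m => (0:ℤ) :: List.replicate m 1)).flatten

/-- `msize [n_1, ..., n_r] = Σ i·n_i`, the size of the partition `(r^{n_r},...,1^{n_1})`. -/
def msize (ns : List ℕ) : ℕ :=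
  (List.zipWith (fun m i => m * i) ns (List.range' 1 ns.length)).sum

/-- The reduced Dyck vector `0 B_μ` of the tail initiator of a partition. -/
def tiVec (l : List ℕ) : List ℤ :=
  (0:ℤ) :: ((List.range' 1 (l.headD 0)).map
    (fun i => (0:ℤ) :: List.replicate (l.count i) (1:ℤ))).flatten

/-- `c` is the second-order tail initiator of the partition `l`: obtained from
`[0 B_μ]` by iterating the extended next-down map as long as possible. -/
def IsTI2 (l : List ℕ) (c : DyckClass) : Prop :=
  Relation.ReflTransGen (fun x y => nuRel y x) (cls (tiVec l)) c ∧ ∀ d, ¬ nuRel d c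

/-- `m` is the minimum triangle height of the Dyck class `c`. -/
def mindIs (c : DyckClass) (m : ℕ) : Prop :=
  ∃ v, IsReducedDV v ∧ c = cls v ∧ v.length = m

/-- Flagpole partition: `|μ| + 8 ≤ 2 mind(TI₂(μ))`. -/
def IsFlagpole (l : List ℕ) : Prop :=
  ∃ c m, IsTI2 l c ∧ mindIs c m ∧ l.sum + 8 ≤ 2 * m

/-- The Dyck vector `v(λ,a,ε) = 0 0 1 2^{a-ε} B_λ⁺ 1^ε`. -/
def vLam (ns : List ℕ) (a ε : ℕ) : List ℤ :=
  [0, 0, 1] ++ List.replicate (a - ε) (2:ℤ) ++ (bWord ns).map (· + 1) ++ List.replicate ε 1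

/-
Deleting the letters of `B` one at a time from the right, it suffices to show that deleting a
single letter `x`, preceded by `P = A B'` and followed by `T = 1 2^n`, lowers `defc` by at least 2.
On nonnegative vectors `dinv` just counts the pairs `i < j` with `v_i - v_j ∈ {0, 1}`, so the
deletion lowers `defc` by `|P| + |T| - x - L - R`, where `L` counts the `p ∈ P` with
`p - x ∈ {0, 1}` and `R = [x ∈ {1, 2}] + n [x ∈ {2, 3}]` the `y ∈ T` with `x - y ∈ {0, 1}`.
The entries of `P` below `x` are not counted by `L`: there are at least `x` of them, since rises
are at most 1 and so every value below `x` occurs in `P`; at least two if `x ≥ 1` (the zeros of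
`A`); and at least four if `x ≥ 2` (the zeros and ones of `A`, and some `1` of `P`).
-/

def dinvPairs : List ℤ → ℕ
  | [] => 0
  | x :: l => l.countP (fun y => x - y = 0 ∨ x - y = 1) + dinvPairs l

lemma sum_map_negContrib_eq_zero {v : List ℤ} (h : ∀ x ∈ v, 0 ≤ x) :
    (v.map negContrib).sum = 0 := by
  refine List.sum_eq_zero fun c hc => ?_
  obtain ⟨x, hx, rfl⟩ := List.mem_map.mp hc
  have := h x hx
  simp only [negContrib]
  split_ifs <;> omega

lemma countP_eq_sum_fin {α : Type*} (p : α → Bool) (l : List α) :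
    l.countP p = ∑ i : Fin l.length, if p l[i] then 1 else 0 := by
  induction l with
  | nil => rfl
  | cons a l ih =>
    rw [List.countP_cons, ih, add_comm]
    erw [Fin.sum_univ_succ]
    rfl

lemma card_dinv_filter_eq_dinvPairs (v : List ℤ) :
    (Finset.univ.filter (fun p : Fin v.length × Fin v.length =>
      (p.1 : ℕ) < (p.2 : ℕ) ∧ (v.get p.1 - v.get p.2 = 0 ∨ v.get p.1 - v.get p.2 = 1))).card
      = dinvPairs v := by
  induction v with
  | nil => rfl
  | cons x l ih =>
    rw [Finset.card_filter, Fintype.sum_prod_type] at ih ⊢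
    erw [Fin.sum_univ_succ]
    rw [dinvPairs, ← ih, countP_eq_sum_fin]
    congr 1
    · erw [Fin.sum_univ_succ]
      simp
    · refine Finset.sum_congr rfl fun i _ => ?_
      erw [Fin.sum_univ_succ]
      simp

lemma dinv_eq_dinvPairs {v : List ℤ} (h : ∀ x ∈ v, 0 ≤ x) : dinv v = dinvPairs v := by
  rw [dinv, card_dinv_filter_eq_dinvPairs, sum_map_negContrib_eq_zero h, add_zero]

lemma dinvPairs_insert (P T : List ℤ) (x : ℤ) :
    dinvPairs (P ++ x :: T) = dinvPairs (P ++ T) + P.countP (fun p => p - x = 0 ∨ p - x = 1)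
      + T.countP (fun y => x - y = 0 ∨ x - y = 1) := by
  induction P with
  | nil => simp [dinvPairs, add_comm]
  | cons p P ih =>
    simp only [List.cons_append, dinvPairs, ih, List.countP_append, List.countP_cons]
    omega

lemma defc_insert {P T : List ℤ} {x : ℤ} (hP : ∀ p ∈ P, 0 ≤ p) (hT : ∀ y ∈ T, 0 ≤ y)
    (hx : 0 ≤ x) :
    defc (P ++ x :: T) = defc (P ++ T) + P.length + T.length - x
      - P.countP (fun p => p - x = 0 ∨ p - x = 1) - T.countP (fun y => x - y = 0 ∨ x - y = 1) := by
  have hPT : ∀ y ∈ P ++ T, 0 ≤ y := by simp only [List.mem_append]; grind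
  have hPxT : ∀ y ∈ P ++ x :: T, 0 ≤ y := by simp only [List.mem_append, List.mem_cons]; grind
  rw [defc, defc, dinv_eq_dinvPairs hPT, dinv_eq_dinvPairs hPxT, dinvPairs_insert, area, area]
  simp only [List.length_append, List.length_cons, List.sum_append, List.sum_cons,
    Nat.add_succ, Nat.choose_succ_succ', Nat.choose_one_right]
  push_cast
  ring

lemma countP_add_countP_le_countP {α : Type*} {p q r : α → Bool} (l : List α)
    (hp : ∀ a, p a → r a) (hq : ∀ a, q a → r a) (hpq : ∀ a, p a → ¬ q a) :
    l.countP p + l.countP q ≤ l.countP r := by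
  induction l with
  | nil => simp
  | cons a l ih =>
    grind

lemma isQDV_iff {v : List ℤ} :
    IsQDV v ↔ v.head? = some 0 ∧ v.IsChain (fun a b => b ≤ a + 1) := by
  rw [IsQDV, List.isChain_iff_getElem]
  refine and_congr_right fun _ => forall_congr' fun i => ?_
  constructor
  · intro h hi
    simpa [List.getD_eq_getElem, hi, Nat.lt_of_succ_lt hi] using h hi
  · intro h hi
    simpa [List.getD_eq_getElem, hi, Nat.lt_of_succ_lt hi] using h hi

lemma IsDyck.left_of_append {l₁ l₂ : List ℤ} (h : IsDyck (l₁ ++ l₂)) (hl₁ : l₁ ≠ []) : IsDyck l₁ := by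
  obtain ⟨hq, hnn⟩ := h
  rw [isQDV_iff] at hq
  refine ⟨isQDV_iff.mpr ⟨?_, hq.2.left_of_append⟩, fun x hx => hnn x (List.mem_append_left _ hx)⟩
  obtain ⟨a, l, rfl⟩ := List.exists_cons_of_ne_nil hl₁
  simpa using hq.1

lemma mem_of_isChain_of_le_of_lt {a x y : ℤ} {l : List ℤ}
    (h : (a :: l ++ [x]).IsChain (fun a b => b ≤ a + 1)) (hay : a ≤ y) (hyx : y < x) :
    y ∈ a :: l := by
  induction l generalizing a with
  | nil =>
    simp only [List.cons_append, List.nil_append, List.isChain_cons_cons, List.isChain_singleton] at h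
    simp only [List.mem_singleton]
    omega
  | cons b l ih =>
    rw [List.cons_append, List.cons_append, List.isChain_cons_cons, ← List.cons_append] at h
    rcases eq_or_lt_of_le hay with rfl | hay
    · exact List.mem_cons_self
    · exact List.mem_cons_of_mem _ (ih h.2 (by omega))

lemma IsDyck.mem_of_lt_last {P : List ℤ} {x y : ℤ} (h : IsDyck (P ++ [x])) (hy : 0 ≤ y)
    (hyx : y < x) : y ∈ P := by
  obtain ⟨hq, hnn⟩ := h
  rw [isQDV_iff] at hq
  cases P with
  | nil => grind
  | cons a P =>
    obtain rfl : a = 0 := by simpa using hq.1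
    exact mem_of_isChain_of_le_of_lt hq.2 hy hyx

lemma toNat_le_countP_lt {P : List ℤ} {x : ℤ} (h : ∀ y, 0 ≤ y → y < x → y ∈ P) :
    x.toNat ≤ P.countP (· < x) := by
  calc x.toNat = (Finset.Ico 0 x).card := by simp
    _ ≤ (P.filter (· < x)).toFinset.card :=
        Finset.card_le_card fun y hy => by
          rw [Finset.mem_Ico] at hy
          simpa [hy.2] using h y hy.1 hy.2
    _ ≤ P.countP (· < x) := by
        rw [List.countP_eq_length_filter]; exact List.toFinset_card_le _

lemma defc_add_two_le_defc_insert {P : List ℤ} {x : ℤ} {n : ℕ} (hn : 1 ≤ n) (hPx : IsDyck (P ++ [x]))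
    (hP : 3 ≤ P.count 0 ∨ (2 ≤ P.count 0 ∧ 2 ≤ P.count 1)) :
    defc (P ++ 1 :: List.replicate n 2) + 2 ≤ defc (P ++ x :: 1 :: List.replicate n 2) := by
  have hnn : ∀ p ∈ P, 0 ≤ p := fun p hp => hPx.2 p (List.mem_append_left _ hp)
  have hx : 0 ≤ x := hPx.2 x (by simp)
  have hIVT : ∀ y, 0 ≤ y → y < x → y ∈ P := fun y hy hyx => hPx.mem_of_lt_last hy hyx
  have hsplit : P.countP (fun p => p - x = 0 ∨ p - x = 1) + P.countP (· < x) ≤ P.length :=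
    (countP_add_countP_le_countP P (r := fun _ => true) (by simp) (by simp)
      (by grind)).trans (List.countP_le_length)
  have hzero : 1 ≤ x → P.count 0 ≤ P.countP (· < x) := fun h =>
    List.countP_mono_left (by grind)
  have hzero_one : 2 ≤ x → P.count 0 + P.count 1 ≤ P.countP (· < x) := fun h =>
    countP_add_countP_le_countP P (by grind) (by grind) (by simp)
  have hone : 2 ≤ x → 1 ≤ P.count 1 := fun h =>
    List.count_pos_iff.mpr (hIVT 1 (by norm_num) (by omega))
  have hbelow := toNat_le_countP_lt hIVT
  have htail : (1 :: List.replicate n (2 : ℤ)).countP (fun y => x - y = 0 ∨ x - y = 1)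
      = (if x = 1 ∨ x = 2 then 1 else 0) + (if x = 2 ∨ x = 3 then n else 0) := by
    simp only [List.countP_cons, List.countP_replicate, decide_eq_true_eq]
    split_ifs <;> omega
  rw [defc_insert hnn (by simp) hx, htail]
  simp only [List.length_cons, List.length_replicate]
  split_ifs <;> push_cast <;> omega

lemma two_mul_length_add_defc_le {A : List ℤ} (B : List ℤ) {n : ℕ} (hn : 1 ≤ n) (hAB : IsDyck (A ++ B))
    (hA : 3 ≤ A.count 0 ∨ (2 ≤ A.count 0 ∧ 2 ≤ A.count 1)) :
    2 * (B.length : ℤ) + defc (A ++ 1 :: List.replicate n 2)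
      ≤ defc (A ++ B ++ 1 :: List.replicate n 2) := by
  induction B using List.reverseRecOn with
  | nil => simp
  | append_singleton B x ih =>
    have hA_ne : A ≠ [] := by rintro rfl; simp at hA
    rw [← List.append_assoc] at hAB
    have hAB' : IsDyck (A ++ B) := hAB.left_of_append (by simp [hA_ne])
    have hcount : 3 ≤ (A ++ B).count 0 ∨ (2 ≤ (A ++ B).count 0 ∧ 2 ≤ (A ++ B).count 1) := by
      simp only [List.count_append]; omega
    have hstep := defc_add_two_le_defc_insert hn hAB hcount
    have hprev := ih hAB'
    simp only [List.append_assoc, List.singleton_append, List.length_append,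
      List.length_singleton] at hstep hprev ⊢
    push_cast
    linarith

theorem stmt2_general (A B : List ℤ) (n : ℕ) (hn : 1 ≤ n)
    (hv : IsDyck (A ++ B ++ [1] ++ List.replicate n (2:ℤ)))
    (hA : 3 ≤ A.count 0 ∨ (A.count 0 = 2 ∧ 2 ≤ A.count 1)) :
    2 * (B.length : ℤ) + defc (A ++ [1] ++ List.replicate n (2:ℤ))
      ≤ defc (A ++ B ++ [1] ++ List.replicate n (2:ℤ)) := by
  have hA_ne : A ≠ [] := by rintro rfl; simp at hA
  have hAB : IsDyck (A ++ B) := by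
    rw [List.append_assoc _ [1]] at hv
    exact hv.left_of_append (by simp [hA_ne])
  simpa only [List.append_assoc, List.singleton_append] using
    two_mul_length_add_defc_le B hn hAB (by omega)

theorem stmt2 (A B : List ℤ) (n : ℕ) (hn : 1 ≤ n)
    (hv : IsDyck (A ++ B ++ [1] ++ List.replicate n (2:ℤ)))
    (hA' : IsDyck (A ++ [1] ++ List.replicate n (2:ℤ)))
    (hA : 3 ≤ A.count 0 ∨ (A.count 0 = 2 ∧ 2 ≤ A.count 1)) :
    2 * (B.length : ℤ) + defc (A ++ [1] ++ List.replicate n (2:ℤ))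
      ≤ defc (A ++ B ++ [1] ++ List.replicate n (2:ℤ)) :=
  stmt2_general A B n hn hv hA
end

section
/- For any nonzero partition μ = (r^{n_r}, ..., 2^{n_2}, 1^{n_1}) with n_r > 0, the Dyck vector w = 0 B_μ where B_μ = 0 1^{n_1} 0 1^{n_2} ⋯ 0 1^{n_r} satisfies: len(w) = μ_1 + ℓ(μ) + 1, defc(w) = |μ|, area(w) = ℓ(μ), and dinv(w) = C(μ_1 + ℓ(μ) + 1, 2) - ℓ(μ) - |μ|. -/
/- In a word over {0,1} every pair of positions i < j is a dinv pair unless (v_i, v_j) = (0, 1),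
so dinv(w) = C(len w, 2) − #{(0,1)-pairs of w}. In w = 0 B_μ the ones of the i-th block are
preceded by i + 1 zeros, so w has Σ (i+1) n_i = |μ| + ℓ(μ) such pairs, while area(w) = ℓ(μ);
this gives dinv(w) and then defc(w) = |μ|. -/

def pairCount {α : Type*} (r : α → α → Prop) [DecidableRel r] (v : List α) : ℕ :=
  (Finset.univ.filter (fun p : Fin v.length × Fin v.length =>
      (p.1 : ℕ) < (p.2 : ℕ) ∧ r (v.get p.1) (v.get p.2))).card

lemma card_filter_getElem_eq_countP {α : Type*} (p : α → Prop) [DecidablePred p] (v : List α) :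
    (Finset.univ.filter (fun i : Fin v.length => p v[(i : ℕ)])).card
      = v.countP (fun y => decide (p y)) := by
  induction v with
  | nil => rfl
  | cons x v ih =>
    refine (Fin.card_filter_univ_succ' (fun i : Fin (v.length + 1) => p (x :: v)[(i : ℕ)])).trans ?_
    simp only [Fin.coe_ofNat_eq_mod, Nat.zero_mod, List.getElem_cons_zero, Fin.val_succ,
      List.getElem_cons_succ, ih, List.countP_cons, decide_eq_true_eq, add_comm,
      Nat.add_right_cancel_iff]
    congr

section pairCount

variable {α : Type*} (r : α → α → Prop) [DecidableRel r]

lemma pairCount_cons (x : α) (v : List α) :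
    pairCount r (x :: v) = v.countP (fun y => decide (r x y)) + pairCount r v := by
  simp only [pairCount, Finset.card_filter, List.length_cons, Fintype.sum_prod_type,
    Fin.sum_univ_succ]
  simp [card_filter_getElem_eq_countP]

lemma pairCount_add_pairCount_of_iff_not (s : α → α → Prop) [DecidableRel s] (v : List α)
    (h : ∀ a ∈ v, ∀ b ∈ v, s a b ↔ ¬ r a b) :
    pairCount r v + pairCount s v = v.length.choose 2 := by
  induction v with
  | nil => rfl
  | cons x v ih =>
    have hx : v.countP (fun y => decide (r x y)) + v.countP (fun y => decide (s x y))
        = v.length := by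
      rw [List.length_eq_countP_add_countP (fun y => decide (r x y))]
      congr 1
      refine List.countP_congr fun y hy => ?_
      simp [h x (by simp) y (by simp [hy])]
    have hv := ih fun a ha b hb => h a (by simp [ha]) b (by simp [hb])
    rw [pairCount_cons, pairCount_cons, List.length_cons, Nat.choose_succ_succ' _ 1,
      Nat.choose_one_right, ← hv, ← hx]
    ring

end pairCount

lemma dinv_eq_pairCount_of_nonneg (v : List ℤ) (hv : ∀ x ∈ v, 0 ≤ x) :
    dinv v = pairCount (fun a b => a - b = 0 ∨ a - b = 1) v := by
  have hneg : (v.map negContrib).sum = 0 := by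
    refine List.sum_eq_zero fun n hn => ?_
    obtain ⟨x, hx, rfl⟩ := List.mem_map.mp hn
    have := hv x hx
    simp only [negContrib]
    split_ifs <;> omega
  rw [dinv, hneg, add_zero]
  rfl

lemma dinv_add_pairCount_zero_one (v : List ℤ) (hv : ∀ x ∈ v, x = 0 ∨ x = 1) :
    dinv v + pairCount (fun a b => a = 0 ∧ b = 1) v = v.length.choose 2 := by
  rw [dinv_eq_pairCount_of_nonneg v fun x hx => by rcases hv x hx with rfl | rfl <;> norm_num]
  refine pairCount_add_pairCount_of_iff_not _ _ v fun a ha b hb => ?_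
  rcases hv a ha with rfl | rfl <;> rcases hv b hb with rfl | rfl <;> norm_num

lemma sum_zipWith_mul_range'_succ (ns : List ℕ) (k : ℕ) :
    (List.zipWith (· * ·) ns (List.range' (k + 1) ns.length)).sum
      = (List.zipWith (· * ·) ns (List.range' k ns.length)).sum + ns.sum := by
  induction ns generalizing k with
  | nil => simp
  | cons m ns ih =>
    simp only [List.length_cons, List.range'_succ, List.zipWith_cons_cons, List.sum_cons,
      ih (k + 1), Nat.mul_succ, ih k]
    omega

lemma msize_cons (m : ℕ) (ns : List ℕ) : msize (m :: ns) = m + ns.sum + msize ns := by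
  simp only [msize, List.length_cons, List.range'_succ, List.zipWith_cons_cons, List.sum_cons,
    sum_zipWith_mul_range'_succ]
  omega

@[simp]
lemma bWord_nil : bWord [] = [] := rfl

@[simp]
lemma bWord_cons (m : ℕ) (ns : List ℕ) :
    bWord (m :: ns) = 0 :: (List.replicate m 1 ++ bWord ns) := by
  simp [bWord]

lemma length_bWord (ns : List ℕ) : (bWord ns).length = ns.length + ns.sum := by
  induction ns with
  | nil => rfl
  | cons m ns ih =>
    simp only [bWord_cons, List.length_cons, List.length_append, List.length_replicate, ih,
      List.sum_cons]
    omega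

lemma sum_bWord (ns : List ℕ) : (bWord ns).sum = ns.sum := by
  induction ns with
  | nil => rfl
  | cons m ns ih => simp [ih]

lemma countP_eq_one_bWord (ns : List ℕ) : (bWord ns).countP (· = 1) = ns.sum := by
  induction ns with
  | nil => rfl
  | cons m ns ih => simp [List.countP_replicate, ih]

lemma eq_zero_or_eq_one_of_mem_bWord {ns : List ℕ} {x : ℤ} (hx : x ∈ bWord ns) :
    x = 0 ∨ x = 1 := by
  induction ns with
  | nil => simp at hx
  | cons m ns ih =>
    simp only [bWord_cons, List.mem_cons, List.mem_append, List.mem_replicate] at hx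
    rcases hx with hx | ⟨-, hx⟩ | hx
    exacts [.inl hx, .inr hx, ih hx]

lemma pairCount_zero_one_bWord (ns : List ℕ) :
    pairCount (fun a b => a = 0 ∧ b = 1) (bWord ns) = msize ns := by
  have hones : ∀ (m : ℕ) (w : List ℤ), pairCount (fun a b => a = 0 ∧ b = 1)
      (List.replicate m 1 ++ w) = pairCount (fun a b => a = 0 ∧ b = 1) w := by
    intro m w
    induction m with
    | zero => rfl
    | succ m ih => simp [List.replicate_succ, pairCount_cons, ih]
  induction ns with
  | nil => rfl
  | cons m ns ih =>
    rw [bWord_cons, pairCount_cons, hones, ih, msize_cons]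
    simp [List.countP_replicate, countP_eq_one_bWord]

theorem stmt11_general (ns : List ℕ) :
    ((0:ℤ) :: bWord ns).length = ns.length + ns.sum + 1 ∧
    defc ((0:ℤ) :: bWord ns) = (msize ns : ℤ) ∧
    area ((0:ℤ) :: bWord ns) = (ns.sum : ℤ) ∧
    (dinv ((0:ℤ) :: bWord ns) : ℤ)
      = ((ns.length + ns.sum + 1).choose 2 : ℤ) - (ns.sum : ℤ) - (msize ns : ℤ) := by
  have hlength : ((0:ℤ) :: bWord ns).length = ns.length + ns.sum + 1 := by
    simp [length_bWord]
  have harea : area ((0:ℤ) :: bWord ns) = ns.sum := by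
    simp [area, sum_bWord]
  have hpairs : pairCount (fun a b => a = 0 ∧ b = 1) ((0:ℤ) :: bWord ns) = ns.sum + msize ns := by
    rw [pairCount_cons, pairCount_zero_one_bWord]
    simp [countP_eq_one_bWord]
  have hdinv := dinv_add_pairCount_zero_one ((0:ℤ) :: bWord ns) fun x hx => by
    rcases List.mem_cons.mp hx with rfl | hx
    exacts [.inl rfl, eq_zero_or_eq_one_of_mem_bWord hx]
  rw [hpairs, hlength] at hdinv
  have hdinv' : (dinv ((0:ℤ) :: bWord ns) : ℤ)
      = ((ns.length + ns.sum + 1).choose 2 : ℤ) - ns.sum - msize ns := by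
    omega
  refine ⟨hlength, ?_, harea, hdinv'⟩
  rw [defc, hlength, harea, hdinv']
  ring

theorem stmt11 (ns : List ℕ) (hne : ns ≠ []) (hlast : 0 < ns.getLastD 0) :
    ((0:ℤ) :: bWord ns).length = ns.length + ns.sum + 1 ∧
    defc ((0:ℤ) :: bWord ns) = (msize ns : ℤ) ∧
    area ((0:ℤ) :: bWord ns) = (ns.sum : ℤ) ∧
    (dinv ((0:ℤ) :: bWord ns) : ℤ)
      = ((ns.length + ns.sum + 1).choose 2 : ℤ) - (ns.sum : ℤ) - (msize ns : ℤ) :=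
  stmt11_general ns
end
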